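/- arXiv:1910.04976 — 6 statements merged into one kernel-verified Lean document; each statement's English description precedes it below -/
import Mathlib

section
/- For any θ > 0, the sum over n ≥ 1 of 8(n-1)/((n+θ)(n+θ+1)(n+θ-1)) equals 4/(1+θ). -/
/-!
The summand is the backward difference `F n - F (n + 1)` of
`F n = (4θ + 8) / (n + θ + 1) - 4θ / (n + θ)`, which decreases to `0`; the series therefore
telescopes to `F 0 = 4 / (1 + θ)`.
-/

open Filter Topology

theorem hasSum_sub_succ_of_antitone {F : ℕ → ℝ} {l : ℝ} (hF : Antitone F)
    (hl : Tendsto F atTop (𝓝 l)) : HasSum (fun n ↦ F n - F (n + 1)) (F 0 - l) := by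
  rw [hasSum_iff_tendsto_nat_of_nonneg fun n ↦ sub_nonneg.2 (hF n.le_succ)]
  simp_rw [Finset.sum_range_sub']
  exact tendsto_const_nhds.sub hl

namespace DirichletStein

noncomputable def antidifference (θ : ℝ) (n : ℕ) : ℝ :=
  (4 * θ + 8) / ((n : ℝ) + θ + 1) - 4 * θ / ((n : ℝ) + θ)

variable {θ : ℝ}

theorem summand_eq_antidifference_sub (hθ : 0 < θ) (n : ℕ) :
    8 * (((n : ℝ) + 1) - 1) /
      (((n : ℝ) + 1 + θ) * ((n : ℝ) + 1 + θ + 1) * ((n : ℝ) + 1 + θ - 1)) =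
      antidifference θ n - antidifference θ (n + 1) := by
  have h₀ : (n : ℝ) + θ ≠ 0 := by positivity
  have h₁ : (n : ℝ) + θ + 1 ≠ 0 := by positivity
  have h₂ : (n : ℝ) + θ + 2 ≠ 0 := by positivity
  rw [add_sub_cancel_right, add_sub_right_comm, add_sub_cancel_right]
  simp only [antidifference, Nat.cast_add, Nat.cast_one]
  field_simp
  ring

theorem antitone_antidifference (hθ : 0 < θ) : Antitone (antidifference θ) := by
  refine antitone_nat_of_succ_le fun n ↦ sub_nonneg.1 ?_
  rw [← summand_eq_antidifference_sub hθ n, add_sub_cancel_right, add_sub_right_comm,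
    add_sub_cancel_right]
  positivity

theorem tendsto_antidifference : Tendsto (antidifference θ) atTop (𝓝 0) := by
  have h_inv (c a : ℝ) : Tendsto (fun n : ℕ ↦ a / ((n : ℝ) + c)) atTop (𝓝 0) :=
    tendsto_const_nhds.div_atTop (tendsto_atTop_add_const_right _ c tendsto_natCast_atTop_atTop)
  unfold antidifference
  simpa only [add_assoc, sub_zero] using (h_inv (θ + 1) (4 * θ + 8)).sub (h_inv θ (4 * θ))

theorem antidifference_zero (hθ : 0 < θ) : antidifference θ 0 = 4 / (1 + θ) := by
  have : θ + 1 ≠ 0 := by positivity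
  simp only [antidifference, Nat.cast_zero, zero_add]
  field_simp
  ring

end DirichletStein

open DirichletStein in
/-- For any θ > 0, ∑_{n≥1} 8(n-1)/((n+θ)(n+θ+1)(n+θ-1)) = 4/(1+θ). -/
theorem stmt_2 (θ : ℝ) (hθ : 0 < θ) :
    ∑' n : ℕ, 8 * (((n : ℝ) + 1) - 1) /
      (((n : ℝ) + 1 + θ) * ((n : ℝ) + 1 + θ + 1) * ((n : ℝ) + 1 + θ - 1)) = 4 / (1 + θ) := by
  simp_rw [summand_eq_antidifference_sub hθ]
  rw [(hasSum_sub_succ_of_antitone (antitone_antidifference hθ) tendsto_antidifference).tsum_eq,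
    sub_zero, antidifference_zero hθ]
end

section
/- For any θ > 0, the sum over n ≥ 1 of 16(n-1)(n-2)/((n+θ)(n+θ+1)(n+θ+2)(n+θ-1)) equals 16/(3(2+θ)). -/
/-- For any θ > 0, ∑_{n≥1} 16(n-1)(n-2)/((n+θ)(n+θ+1)(n+θ+2)(n+θ-1)) = 16/(3(2+θ)). -/
theorem stmt_3 (θ : ℝ) (hθ : 0 < θ) :
    ∑' n : ℕ, 16 * (((n : ℝ) + 1) - 1) * (((n : ℝ) + 1) - 2) /
      (((n : ℝ) + 1 + θ) * ((n : ℝ) + 1 + θ + 1) * ((n : ℝ) + 1 + θ + 2) * ((n : ℝ) + 1 + θ - 1))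
      = 16 / (3 * (2 + θ)) := by
  set c : ℝ := 16*θ*(1+θ)/3 with hc
  set g : ℕ → ℝ := fun n => (16*(n:ℝ)^2 + 16*θ*(n:ℝ) + c) /
      (((n:ℝ)+θ)*((n:ℝ)+1+θ)*((n:ℝ)+2+θ)) with hg
  set f : ℕ → ℝ := fun n => 16 * (((n : ℝ) + 1) - 1) * (((n : ℝ) + 1) - 2) /
      (((n : ℝ) + 1 + θ) * ((n : ℝ) + 1 + θ + 1) * ((n : ℝ) + 1 + θ + 2) * ((n : ℝ) + 1 + θ - 1)) with hf
  have hn0 : ∀ n : ℕ, (0:ℝ) ≤ (n:ℝ) := fun n => n.cast_nonneg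
  have key : ∀ n : ℕ, f n = g n - g (n+1) := by
    intro n
    have h := hn0 n
    have h0 : ((n:ℝ)+θ) ≠ 0 := by positivity
    have h1 : ((n:ℝ)+1+θ) ≠ 0 := by positivity
    have h2 : ((n:ℝ)+2+θ) ≠ 0 := by positivity
    have h3 : ((n:ℝ)+3+θ) ≠ 0 := by positivity
    have h1' : ((n:ℝ)+1+θ+1) ≠ 0 := by positivity
    have h2' : ((n:ℝ)+1+θ+2) ≠ 0 := by positivity
    have h3' : ((n:ℝ)+1+θ-1) = (n:ℝ)+θ := by ring
    simp only [hf, hg, hc]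
    push_cast
    rw [h3']
    field_simp
    ring
  have hfnonneg : ∀ n : ℕ, 0 ≤ f n := by
    intro n
    have h := hn0 n
    match n with
    | 0 => simp [hf]
    | (m+1) =>
      have hm := hn0 m
      apply div_nonneg
      · push_cast; nlinarith
      · push_cast
        have e : ((m:ℝ)+1+1+θ-1) = (m:ℝ)+1+θ := by ring
        rw [e]; positivity
  have hgnonneg : ∀ n : ℕ, 0 ≤ g n := by
    intro n
    have h := hn0 n
    simp only [hg, hc]
    apply div_nonneg
    · nlinarith [sq_nonneg (n:ℝ), mul_nonneg hθ.le h, mul_nonneg hθ.le hθ.le]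
    · positivity
  have hgle : ∀ n : ℕ, g n ≤ (16 + 16*θ + c) / ((n:ℝ)+θ) := by
    intro n
    have h := hn0 n
    have hden : (0:ℝ) < ((n:ℝ)+θ)*((n:ℝ)+1+θ)*((n:ℝ)+2+θ) := by positivity
    have hnθ : (0:ℝ) < (n:ℝ)+θ := by positivity
    simp only [hg]
    rw [div_le_div_iff₀ hden hnθ]
    have hcpos : 0 ≤ c := by rw [hc]; positivity
    nlinarith [mul_pos hnθ hnθ, sq_nonneg ((n:ℝ)), mul_nonneg h h, mul_nonneg (mul_nonneg h h) h,
      mul_nonneg hcpos h, mul_nonneg (mul_nonneg hcpos h) h, mul_nonneg hθ.le h,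
      mul_nonneg (mul_nonneg hθ.le h) h, mul_nonneg (mul_nonneg hθ.le hθ.le) h,
      mul_nonneg hθ.le hθ.le, mul_nonneg (mul_nonneg hθ.le hθ.le) hθ.le,
      mul_nonneg hcpos hθ.le, mul_nonneg (mul_nonneg hcpos hθ.le) hθ.le]
  have hgt : Filter.Tendsto g Filter.atTop (nhds 0) := by
    have hbase : Filter.Tendsto (fun n : ℕ => ((n:ℝ)+θ)⁻¹) Filter.atTop (nhds 0) := by
      apply Filter.Tendsto.inv_tendsto_atTop
      exact Filter.tendsto_atTop_add_const_right _ θ tendsto_natCast_atTop_atTop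
    have h2 := hbase.const_mul (16 + 16*θ + c)
    rw [mul_zero] at h2
    have h3 : Filter.Tendsto (fun n : ℕ => (16 + 16*θ + c) / ((n:ℝ)+θ)) Filter.atTop (nhds 0) := by
      simpa [div_eq_mul_inv] using h2
    exact squeeze_zero hgnonneg hgle h3
  have hsum : HasSum f (g 0) := by
    rw [hasSum_iff_tendsto_nat_of_nonneg hfnonneg]
    have hps : ∀ N, ∑ i ∈ Finset.range N, f i = g 0 - g N := by
      intro N
      calc ∑ i ∈ Finset.range N, f i = ∑ i ∈ Finset.range N, (g i - g (i+1)) := by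
            exact Finset.sum_congr rfl fun i _ => key i
        _ = g 0 - g N := Finset.sum_range_sub' g N
    simp_rw [hps]
    simpa using tendsto_const_nhds.sub hgt
  rw [hsum.tsum_eq]
  rw [hg, hc]
  push_cast
  have h1 : θ + 1 ≠ 0 := by positivity
  have h2 : θ + 2 ≠ 0 := by positivity
  field_simp
  ring
end

section
/- Let Z be the number of bins containing at least two balls when x balls are allocated independently and uniformly at random into N bins, where 2 ≤ x ≤ N. Then E[Z] = N(1 - (x/N)(1-1/N)^{x-1} - (1-1/N)^x), and E[Z] ≥ x(x-1)/(6N). -/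
/-!
Counting allocations `ω : α → β` by the set of balls landing in a fixed bin `b` shows that exactly
`C(x, k) (N - 1)^(x - k)` of the `N^x` allocations put `k` balls into `b`. Summing over the bins and
discarding the cases `k = 0, 1` gives the mean of `Z`. For the lower bound keep only `k = 2`:
`E[Z] ≥ N C(x, 2) N⁻² (1 - 1/N)^(x - 2)`, and since `x ≤ N`,
`(1 - 1/N)^(x - 2) ≥ (1 - 1/N)^(N - 1) = (1 + 1/(N - 1))^-(N - 1) ≥ e⁻¹ > 1/3`.
-/

open Finset

lemma one_third_lt_one_sub_inv_pow {k N : ℕ} (hk : k < N) : 1 / 3 < (1 - 1 / (N : ℝ)) ^ k := by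
  obtain ⟨n, rfl⟩ : ∃ n, N = n + 1 := ⟨N - 1, by omega⟩
  have hinv : ((1 + (n : ℝ)⁻¹) ^ n)⁻¹ = (1 - 1 / ((n + 1 : ℕ) : ℝ)) ^ n := by
    rcases n with _ | n
    · simp
    rw [← inv_pow]
    congr 1
    push_cast
    field_simp
    ring
  have hq : 1 / ((n + 1 : ℕ) : ℝ) ≤ 1 := by
    rw [div_le_one (by positivity)]
    simp
  calc (1 : ℝ) / 3 < (Real.exp 1)⁻¹ := by
        rw [one_div]
        exact inv_strictAnti₀ (Real.exp_pos 1) (Real.exp_one_lt_d9.trans (by norm_num))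
    _ ≤ ((1 + (n : ℝ)⁻¹) ^ n)⁻¹ := inv_anti₀ (by positivity) Real.one_add_inv_pow_le_exp
    _ = (1 - 1 / ((n + 1 : ℕ) : ℝ)) ^ n := hinv
    _ ≤ (1 - 1 / ((n + 1 : ℕ) : ℝ)) ^ k :=
      pow_le_pow_of_le_one (sub_nonneg.2 hq) (sub_le_self _ (by positivity)) (by omega)

namespace Occupancy

variable {α β : Type*} [Fintype α] [DecidableEq β]

def occupancy (ω : α → β) (b : β) : ℕ := #{i | ω i = b}

variable [DecidableEq α] [Fintype β]

lemma card_filter_fiber_eq (b : β) (S : Finset α) :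
    #{ω : α → β | ({i | ω i = b} : Finset α) = S}
      = (Fintype.card β - 1) ^ (Fintype.card α - #S) := by
  have : ({ω : α → β | ({i | ω i = b} : Finset α) = S} : Finset (α → β))
      = Fintype.piFinset (fun i => if i ∈ S then {b} else univ.erase b) := by
    ext ω
    simp only [mem_filter, mem_univ, true_and, Fintype.mem_piFinset, Finset.ext_iff]
    refine forall_congr' fun i => ?_
    split_ifs with hi <;> simp [hi]
  rw [this, Fintype.card_piFinset]
  simp only [apply_ite card, card_singleton, card_erase_of_mem (mem_univ b), card_univ]
  rw [prod_ite, prod_const_one, one_mul, prod_const, filter_not, filter_mem_eq_inter, univ_inter,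
    card_univ_sdiff]

lemma card_filter_occupancy_eq (b : β) (k : ℕ) :
    #{ω : α → β | occupancy ω b = k} =
      (Fintype.card α).choose k * (Fintype.card β - 1) ^ (Fintype.card α - k) := by
  rw [card_eq_sum_card_fiberwise (f := fun ω : α → β => ({i | ω i = b} : Finset α))
    (t := powersetCard k univ) (s := {ω | occupancy ω b = k})
    fun ω hω => mem_powersetCard_univ.2 (mem_filter.1 hω).2]
  have hfiber : ∀ S ∈ powersetCard k (univ : Finset α),
      #{ω ∈ ({ω | occupancy ω b = k} : Finset (α → β)) | ({i | ω i = b} : Finset α) = S}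
        = (Fintype.card β - 1) ^ (Fintype.card α - k) := by
    intro S hS
    rw [← (mem_powersetCard_univ.1 hS), ← card_filter_fiber_eq b S, filter_filter]
    exact congrArg card (filter_congr fun ω _ => and_iff_right_of_imp fun h => h ▸ rfl)
  rw [sum_congr rfl hfiber, sum_const, card_powersetCard, card_univ, smul_eq_mul]

lemma card_filter_two_le_occupancy_add (b : β) :
    #{ω : α → β | 2 ≤ occupancy ω b} + (Fintype.card β - 1) ^ Fintype.card α
      + Fintype.card α * (Fintype.card β - 1) ^ (Fintype.card α - 1)
      = Fintype.card β ^ Fintype.card α := by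
  have h0 := card_filter_occupancy_eq (α := α) b 0
  have h1 := card_filter_occupancy_eq (α := α) b 1
  rw [Nat.choose_zero_right, one_mul, Nat.sub_zero] at h0
  rw [Nat.choose_one_right] at h1
  rw [← h0, ← h1, ← Fintype.card_fun, ← card_univ, card_filter, card_filter, card_filter,
    ← sum_add_distrib, ← sum_add_distrib, card_eq_sum_ones]
  refine sum_congr rfl fun ω _ => ?_
  rcases occupancy ω b with _ | _ | k <;> simp

lemma sum_card_filter_two_le_occupancy_comm :
    ∑ ω : α → β, #{b | 2 ≤ occupancy ω b} = ∑ b, #{ω : α → β | 2 ≤ occupancy ω b} :=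
  sum_card_bipartiteAbove_eq_sum_card_bipartiteBelow (fun ω b => 2 ≤ occupancy ω b)

lemma sum_card_filter_two_le_occupancy_add :
    ∑ ω : α → β, #{b | 2 ≤ occupancy ω b}
      + Fintype.card β * ((Fintype.card β - 1) ^ Fintype.card α
        + Fintype.card α * (Fintype.card β - 1) ^ (Fintype.card α - 1))
      = Fintype.card β * Fintype.card β ^ Fintype.card α := by
  have h := sum_congr rfl fun (b : β) (_ : b ∈ univ) => card_filter_two_le_occupancy_add (α := α) b
  simp only [sum_add_distrib, sum_const, card_univ, smul_eq_mul] at h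
  rw [sum_card_filter_two_le_occupancy_comm, ← h]
  ring

lemma card_mul_choose_two_le_sum_card_filter_two_le_occupancy :
    Fintype.card β * ((Fintype.card α).choose 2 * (Fintype.card β - 1) ^ (Fintype.card α - 2))
      ≤ ∑ ω : α → β, #{b | 2 ≤ occupancy ω b} := by
  rw [sum_card_filter_two_le_occupancy_comm, ← smul_eq_mul, ← card_univ]
  refine card_nsmul_le_sum _ _ _ fun b _ => ?_
  rw [card_univ, ← card_filter_occupancy_eq b 2]
  exact card_le_card (monotone_filter_right _ fun _ _ h => h.ge)

theorem sum_card_filter_two_le_occupancy_div_eq [Nonempty α] [Nonempty β] :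
    (∑ ω : α → β, (#{b | 2 ≤ occupancy ω b} : ℝ)) / (Fintype.card β : ℝ) ^ Fintype.card α
      = Fintype.card β * (1 - (Fintype.card α / Fintype.card β)
          * (1 - 1 / (Fintype.card β : ℝ)) ^ (Fintype.card α - 1)
        - (1 - 1 / (Fintype.card β : ℝ)) ^ Fintype.card α) := by
  have hexact := sum_card_filter_two_le_occupancy_add (α := α) (β := β)
  obtain ⟨x, hx⟩ : ∃ x, Fintype.card α = x + 1 :=
    Nat.exists_eq_succ_of_ne_zero Fintype.card_ne_zero
  have hN : 1 ≤ Fintype.card β := Fintype.card_pos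
  rw [hx, Nat.add_sub_cancel] at hexact ⊢
  generalize Fintype.card β = N at hexact hN ⊢
  have hS := congrArg (Nat.cast : ℕ → ℝ) hexact
  push_cast [Nat.cast_sub hN] at hS
  have hN' : (N : ℝ) ≠ 0 := by positivity
  rw [eq_sub_of_add_eq hS, one_sub_div hN', div_pow, div_pow]
  push_cast
  field_simp
  ring

theorem le_sum_card_filter_two_le_occupancy_div (h2α : 2 ≤ Fintype.card α)
    (hαβ : Fintype.card α ≤ Fintype.card β) :
    (Fintype.card α : ℝ) * (Fintype.card α - 1) / (6 * Fintype.card β)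
      ≤ (∑ ω : α → β, (#{b | 2 ≤ occupancy ω b} : ℝ)) / (Fintype.card β : ℝ) ^ Fintype.card α := by
  have hlower := card_mul_choose_two_le_sum_card_filter_two_le_occupancy (α := α) (β := β)
  obtain ⟨x, hx⟩ : ∃ x, Fintype.card α = x + 2 := ⟨Fintype.card α - 2, by omega⟩
  rw [hx] at hlower hαβ ⊢
  generalize Fintype.card β = N at hlower hαβ ⊢
  have hS := (Nat.cast_le (α := ℝ)).2 hlower
  push_cast [Nat.cast_sub (by omega : 1 ≤ N), Nat.cast_choose_two, Nat.add_sub_cancel] at hS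
  have hN : (0 : ℝ) < N := by norm_cast; omega
  calc ((x + 2 : ℕ) : ℝ) * ((x + 2 : ℕ) - 1) / (6 * N)
      = (x + 2) * (x + 1) / (2 * N) * (1 / 3) := by push_cast; ring
    _ ≤ (x + 2) * (x + 1) / (2 * N) * (1 - 1 / N) ^ x := by
      gcongr
      exact (one_third_lt_one_sub_inv_pow (by omega)).le
    _ = N * ((x + 2) * (x + 2 - 1) / 2 * (N - 1) ^ x) / N ^ (x + 2) := by
      rw [one_sub_div hN.ne', div_pow]
      field_simp
      ring
    _ ≤ _ := by gcongr

end Occupancy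

/-- Z = number of bins with at least two balls when x balls are placed uniformly at
random into N bins (2 ≤ x ≤ N).  Then
E[Z] = N(1 - (x/N)(1-1/N)^{x-1} - (1-1/N)^x) and E[Z] ≥ x(x-1)/(6N). -/
theorem stmt_8 (x N : ℕ) (hx : 2 ≤ x) (hxN : x ≤ N) :
    ((∑ ω : Fin x → Fin N,
        ((univ.filter (fun b : Fin N => 2 ≤ (univ.filter (fun i : Fin x => ω i = b)).card)).card
          : ℝ)) / (N : ℝ) ^ x
      = (N : ℝ) * (1 - ((x : ℝ) / N) * (1 - 1 / (N : ℝ)) ^ (x - 1) - (1 - 1 / (N : ℝ)) ^ x)) ∧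
    (x : ℝ) * ((x : ℝ) - 1) / (6 * N) ≤
      (∑ ω : Fin x → Fin N,
        ((univ.filter (fun b : Fin N => 2 ≤ (univ.filter (fun i : Fin x => ω i = b)).card)).card
          : ℝ)) / (N : ℝ) ^ x := by
  have : Nonempty (Fin x) := ⟨⟨0, by omega⟩⟩
  have : Nonempty (Fin N) := ⟨⟨0, by omega⟩⟩
  have hmean := Occupancy.sum_card_filter_two_le_occupancy_div_eq (α := Fin x) (β := Fin N)
  have hlower := Occupancy.le_sum_card_filter_two_le_occupancy_div (α := Fin x) (β := Fin N)
    (by simpa using hx) (by simpa using hxN)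
  simp only [Fintype.card_fin, Occupancy.occupancy] at hmean hlower
  exact ⟨hmean, hlower⟩
end

section
/- For integers 2 ≤ x ≤ N, N(1 - (x/N)(1 - 1/N)^{x-1} - (1 - 1/N)^x) ≥ x(x-1)/(2N) - x(x-1)(x-2)/(3N²) ≥ x(x-1)/(6N). -/
lemma nn4 (m : ℕ) : 0 ≤ (m:ℝ)*((m:ℝ)-1)*((m:ℝ)-2)*((m:ℝ)-3) := by
  rcases Nat.lt_or_ge m 4 with h|h
  · interval_cases m <;> norm_num
  · have h4 : (4:ℝ) ≤ m := by exact_mod_cast h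
    nlinarith [sq_nonneg ((m:ℝ)-1), sq_nonneg ((m:ℝ)-2)]

lemma ub4 (t : ℝ) (ht : 0 ≤ t) (ht1 : t ≤ 1) : ∀ m : ℕ,
    (1-t)^m ≤ 1 - m*t + m*(m-1)/2*t^2 - m*(m-1)*(m-2)/6*t^3 + m*(m-1)*(m-2)*(m-3)/24*t^4 := by
  intro m
  induction m with
  | zero => norm_num
  | succ n ih =>
    have h1 : (0:ℝ) ≤ 1 - t := by linarith
    have step : (1-t)^(n+1) ≤ (1-t) * (1 - n*t + n*(n-1)/2*t^2 - n*(n-1)*(n-2)/6*t^3 + n*(n-1)*(n-2)*(n-3)/24*t^4) := by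
      rw [pow_succ, mul_comm]
      exact mul_le_mul_of_nonneg_left ih h1
    refine step.trans ?_
    push_cast
    nlinarith [mul_nonneg (nn4 n) (pow_nonneg ht 5)]

lemma key (a u : ℝ) (hu : 0 ≤ u) (hau : a*u ≤ 1)
    (hK : 0 ≤ a*(a-1)*(a-2)*(a-3)) :
    a*(a-1)*u/2 - a*(a-1)*(a-2)*u^2/3 ≤
      (a - a*(a-1)/2*u + a*(a-1)*(a-2)/6*u^2 - a*(a-1)*(a-2)*(a-3)/24*u^3)
      - a*(1 - (a-1)*u + (a-1)*(a-2)/2*u^2 - (a-1)*(a-2)*(a-3)/6*u^3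
          + (a-1)*(a-2)*(a-3)*(a-4)/24*u^4) := by
  nlinarith [mul_nonneg (mul_nonneg hK (pow_nonneg hu 3)) (by linarith : (0:ℝ) ≤ 3 - a*u),
    mul_nonneg hK (pow_nonneg hu 4)]

set_option maxHeartbeats 1000000 in
/-- For integers 2 ≤ x ≤ N,
N(1 - (x/N)(1-1/N)^{x-1} - (1-1/N)^x) ≥ x(x-1)/(2N) - x(x-1)(x-2)/(3N²) ≥ x(x-1)/(6N). -/
theorem stmt_9 (x N : ℕ) (hx : 2 ≤ x) (hxN : x ≤ N) :
    (x : ℝ) * ((x : ℝ) - 1) / (2 * N) - (x : ℝ) * ((x : ℝ) - 1) * ((x : ℝ) - 2) / (3 * (N : ℝ) ^ 2)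
      ≤ (N : ℝ) * (1 - ((x : ℝ) / N) * (1 - 1 / (N : ℝ)) ^ (x - 1) - (1 - 1 / (N : ℝ)) ^ x) ∧
    (x : ℝ) * ((x : ℝ) - 1) / (6 * N)
      ≤ (x : ℝ) * ((x : ℝ) - 1) / (2 * N) - (x : ℝ) * ((x : ℝ) - 1) * ((x : ℝ) - 2) / (3 * (N : ℝ) ^ 2) := by
  have hN2 : 2 ≤ N := le_trans hx hxN
  set a : ℝ := (x:ℝ) with ha_def
  set n : ℝ := (N:ℝ) with hn_def
  have hn : (0:ℝ) < n := by rw [hn_def]; exact_mod_cast Nat.lt_of_lt_of_le (by norm_num) hN2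
  have ha2 : (2:ℝ) ≤ a := by rw [ha_def]; exact_mod_cast hx
  have han : a ≤ n := by rw [ha_def, hn_def]; exact_mod_cast hxN
  have hu : (0:ℝ) ≤ 1/n := by positivity
  have ht1 : 1/n ≤ 1 := by rw [div_le_one hn]; linarith
  clear_value a n
  have hau : a * (1/n) ≤ 1 := by rw [mul_one_div, div_le_one hn]; exact han
  have hK : 0 ≤ a*(a-1)*(a-2)*(a-3) := by rw [ha_def]; exact nn4 x
  have hc : ((x-1:ℕ):ℝ) = a - 1 := by
    rw [Nat.cast_sub (by omega), ha_def]; norm_num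
  have hub1 := ub4 (1/n) hu ht1 (x-1)
  rw [hc] at hub1
  have ha0 : (0:ℝ) ≤ a := by linarith
  have b1 : a * (1-1/n)^(x-1) ≤ a * (1 - (a-1)*(1/n) + (a-1)*(a-2)/2*(1/n)^2
      - (a-1)*(a-2)*(a-3)/6*(1/n)^3 + (a-1)*(a-2)*(a-3)*(a-4)/24*(1/n)^4) :=
    mul_le_mul_of_nonneg_left (hub1.trans_eq (by ring)) ha0
  have b2 : n * (1-1/n)^x ≤ n * (1 - a*(1/n) + a*(a-1)/2*(1/n)^2
      - a*(a-1)*(a-2)/6*(1/n)^3 + a*(a-1)*(a-2)*(a-3)/24*(1/n)^4) :=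
    mul_le_mul_of_nonneg_left (by have h := ub4 (1/n) hu ht1 x; rw [← ha_def] at h; exact h) hn.le
  have hkey := key a (1/n) hu hau hK
  have e1 : n * (1 - (a/n)*(1-1/n)^(x-1) - (1-1/n)^x)
      = n - a*(1-1/n)^(x-1) - n*(1-1/n)^x := by
    field_simp
  have e2 : n - n * (1 - a*(1/n) + a*(a-1)/2*(1/n)^2 - a*(a-1)*(a-2)/6*(1/n)^3
        + a*(a-1)*(a-2)*(a-3)/24*(1/n)^4)
      = a - a*(a-1)/2*(1/n) + a*(a-1)*(a-2)/6*(1/n)^2 - a*(a-1)*(a-2)*(a-3)/24*(1/n)^3 := by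
    field_simp; ring
  have eL : a*(a-1)/(2*n) - a*(a-1)*(a-2)/(3*n^2)
      = a*(a-1)*(1/n)/2 - a*(a-1)*(a-2)*(1/n)^2/3 := by ring
  constructor
  · rw [e1]
    linarith [hkey, b1, b2, e2, eL]
  · have hxx : (0:ℝ) ≤ a*(a-1) := by nlinarith
    have key2 : a*(a-1)*(a-2)/(3*n^2) ≤ a*(a-1)/(3*n) := by
      rw [div_le_div_iff₀ (by positivity) (by positivity)]
      linarith [mul_nonneg (mul_nonneg hn.le hxx) (by linarith : (0:ℝ) ≤ n - (a-2))]
    have e3 : a*(a-1)/(2*n) - a*(a-1)/(3*n) = a*(a-1)/(6*n) := by ring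
    linarith [key2, e3]
end

section
/- Let Z₁, Z₂, ... be i.i.d. nonnegative integer-valued random variables with mean μ > 0 satisfying the sub-Gaussian lower-tail bound P(S_n - nμ ≤ -t) ≤ exp(-t²/(2nμ)) for all t > 0, where S_n = Z₁ + ... + Z_n. Then for any real s ≥ 1, 1 + 5∑_{n≥1} n·P(S_n < s) ≤ 21 + 85·(s+1)²/μ² (taking s = y - x with integers parameters). More precisely, ∑_{n ≥ (s+1)/μ} n·exp(-(nμ - s)²/(2nμ)) ≤ 4(1 + 4((s+1)/μ)²). -/
open MeasureTheory Real

lemma gauss_sum_real (N : ℕ) : ∑ i ∈ Finset.range N, (i:ℝ) = N * (N - 1) / 2 := by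
  induction N with
  | zero => simp
  | succ n ih => rw [Finset.sum_range_succ, ih]; push_cast; ring

lemma aux_sum (m s : ℝ) (hm : 0 < m) (hs : 1 ≤ s) :
    Summable (fun n : ℕ => if (s + 1) / m ≤ (n : ℝ) then
        (n : ℝ) * Real.exp (-(((n : ℝ) * m - s) ^ 2) / (2 * n * m)) else 0) ∧
    ∑' n : ℕ, (if (s + 1) / m ≤ (n : ℝ) then
        (n : ℝ) * Real.exp (-(((n : ℝ) * m - s) ^ 2) / (2 * n * m)) else 0)
      ≤ 13 * ((s+1)/m)^2 + 2 * ((s+1)/m) + 1 := by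
  set q : ℝ := (s + 1) / m with hqdef
  have hq : 0 < q := by positivity
  set r : ℝ := Real.exp (-(m/4)) with hrdef
  have hr0 : 0 < r := Real.exp_pos _
  have hr1 : r < 1 := by rw [hrdef, Real.exp_lt_one_iff]; linarith
  set g : ℕ → ℝ := fun n => if q ≤ (n : ℝ) then
      (n : ℝ) * Real.exp (-(((n : ℝ) * m - s) ^ 2) / (2 * n * m)) else 0 with hgdef
  set A : ℕ → ℝ := fun n => if (n:ℝ) < 4*q then (n:ℝ) else 0 with hAdef
  set B : ℕ → ℝ := fun n => (n:ℝ) * r ^ n with hBdef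
  have hg_nonneg : ∀ n, 0 ≤ g n := by
    intro n
    simp only [hgdef]
    split
    · positivity
    · exact le_rfl
  have hgle : ∀ n, g n ≤ A n + B n := by
    intro n
    have hB_nonneg : 0 ≤ B n := by simp only [hBdef]; positivity
    have hA_nonneg : 0 ≤ A n := by
      simp only [hAdef]; split <;> positivity
    simp only [hgdef]
    split
    · rename_i hc
      by_cases h4 : (n:ℝ) < 4*q
      · have hA : A n = (n:ℝ) := by simp only [hAdef, if_pos h4]
        rw [hA]
        have : Real.exp (-(((n : ℝ) * m - s) ^ 2) / (2 * n * m)) ≤ 1 := by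
          rw [Real.exp_le_one_iff]
          apply div_nonpos_of_nonpos_of_nonneg
          · simp [sq_nonneg]
          · positivity
        nlinarith [this, Nat.cast_nonneg (α := ℝ) n]
      · push_neg at h4
        have hA : A n = 0 := by simp only [hAdef, if_neg (not_lt.mpr h4)]
        rw [hA, zero_add]
        simp only [hBdef]
        have hnm : 4 * (s + 1) ≤ (n:ℝ) * m := by
          have h4' : (s+1)/m ≤ (n:ℝ)/4 := by rw [hqdef] at h4; linarith
          have := (div_le_iff₀ hm).mp h4'
          linarith
        have hn0 : (0:ℝ) < (n:ℝ) := by nlinarith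
        have key : (n:ℝ) * m / 4 ≤ ((n : ℝ) * m - s) ^ 2 / (2 * n * m) := by
          rw [div_le_div_iff₀ (by norm_num) (by positivity)]
          nlinarith [mul_nonneg hn0.le hm.le]
        have : Real.exp (-(((n : ℝ) * m - s) ^ 2) / (2 * n * m)) ≤ r ^ n := by
          have : r ^ n = Real.exp ((n:ℝ) * -(m/4)) := (Real.exp_nat_mul _ n).symm
          rw [this, Real.exp_le_exp]
          rw [neg_div]
          have : (n:ℝ) * -(m/4) = -((n:ℝ)*m/4) := by ring
          rw [this]
          exact neg_le_neg key
        exact mul_le_mul_of_nonneg_left this (Nat.cast_nonneg n)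
    · positivity
  have hBsum : Summable B := by
    have := summable_pow_mul_geometric_of_norm_lt_one (R := ℝ) 1 (by
      rw [Real.norm_eq_abs, abs_of_pos hr0]; exact hr1)
    simpa [hBdef] using this
  have hAsupp : ∀ n ∉ Finset.range ⌈4*q⌉₊, A n = 0 := by
    intro n hn
    simp only [Finset.mem_range, not_lt] at hn
    have : 4*q ≤ (n:ℝ) := le_trans (Nat.le_ceil _) (by exact_mod_cast hn)
    simp only [hAdef, if_neg (not_lt.mpr this)]
  have hAsum : Summable A := summable_of_ne_finset_zero hAsupp
  have hgsum : Summable g := Summable.of_nonneg_of_le hg_nonneg hgle (hAsum.add hBsum)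
  refine ⟨hgsum, ?_⟩
  have h1 : ∑' n, g n ≤ ∑' n, (A n + B n) := Summable.tsum_le_tsum hgle hgsum (hAsum.add hBsum)
  rw [Summable.tsum_add hAsum hBsum] at h1
  have hA_bound : ∑' n, A n ≤ 8*q^2 + 2*q := by
    rw [tsum_eq_sum hAsupp]
    have : ∑ n ∈ Finset.range ⌈4*q⌉₊, A n ≤ ∑ n ∈ Finset.range ⌈4*q⌉₊, (n:ℝ) := by
      apply Finset.sum_le_sum
      intro i _
      simp only [hAdef]; split
      · exact le_rfl
      · positivity
    refine le_trans this ?_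
    rw [gauss_sum_real]
    have hceil : (⌈4*q⌉₊ : ℝ) < 4*q + 1 := Nat.ceil_lt_add_one (by positivity)
    have h0 : (0:ℝ) ≤ (⌈4*q⌉₊ : ℝ) := Nat.cast_nonneg _
    nlinarith [mul_nonneg (sub_nonneg.mpr hceil.le) (by linarith : (0:ℝ) ≤ (⌈4*q⌉₊:ℝ) + 4*q)]
  have hB_bound : ∑' n, B n ≤ 5*q^2 + 1 := by
    have hBval : ∑' n, B n = r / (1 - r)^2 := by
      simp only [hBdef]
      exact tsum_coe_mul_geometric_of_norm_lt_one (by rw [Real.norm_eq_abs, abs_of_pos hr0]; exact hr1)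
    rw [hBval]
    have hrle : r ≤ 4/(4+m) := by
      have h1 : 1 + m/4 ≤ Real.exp (m/4) := by linarith [Real.add_one_le_exp (m/4)]
      have h2 : r = (Real.exp (m/4))⁻¹ := by rw [hrdef, ← Real.exp_neg]
      rw [h2]
      rw [inv_le_comm₀ (Real.exp_pos _) (by positivity)]
      calc (4/(4+m))⁻¹ = 1 + m/4 := by field_simp
        _ ≤ Real.exp (m/4) := h1
    have h1r : m/(4+m) ≤ 1 - r := by
      have : 4/(4+m) + m/(4+m) = 1 := by field_simp
      linarith
    have hstep : r / (1-r)^2 ≤ (4/(4+m)) / (m/(4+m))^2 := by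
      apply div_le_div₀ (by positivity) hrle (by positivity)
      exact pow_le_pow_left₀ (by positivity) h1r 2
    have heq : (4/(4+m)) / (m/(4+m))^2 = 16/m^2 + 4/m := by
      field_simp; ring
    rw [heq] at hstep
    refine le_trans hstep ?_
    have e1 : 16/m^2 ≤ 4*q^2 := by
      have hq2 : 4*q^2 = (4*(s+1)^2)/m^2 := by rw [hqdef, div_pow]; ring
      rw [hq2]
      gcongr
      nlinarith
    have e2 : 4/m ≤ 2*q := by
      have hq2 : 2*q = (2*(s+1))/m := by rw [hqdef]; ring
      rw [hq2]
      gcongr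
      linarith
    have e3 : 2*q ≤ q^2 + 1 := by nlinarith [sq_nonneg (q-1)]
    linarith
  linarith

/-- If the partial sums Sₙ of i.i.d. nonnegative variables with mean m > 0 satisfy the
sub-Gaussian lower-tail bound P(Sₙ - nm ≤ -t) ≤ exp(-t²/(2nm)) for all t > 0, then for
any real s ≥ 1, 1 + 5∑_{n≥1} n·P(Sₙ < s) ≤ 21 + 85(s+1)²/m², and more precisely
∑_{n ≥ (s+1)/m} n·exp(-(nm-s)²/(2nm)) ≤ 4(1 + 4((s+1)/m)²). -/
theorem stmt_10 {Ω : Type*} [MeasurableSpace Ω] (P : Measure Ω) [IsProbabilityMeasure P]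
    (S : ℕ → Ω → ℝ) (m : ℝ) (hm : 0 < m) (s : ℝ) (hs : 1 ≤ s)
    (htail : ∀ n : ℕ, 1 ≤ n → ∀ t : ℝ, 0 < t →
      (P {ω | S n ω - n * m ≤ -t}).toReal ≤ exp (-(t ^ 2) / (2 * n * m))) :
    (1 + 5 * ∑' n : ℕ, ((n : ℝ) + 1) * (P {ω | S (n + 1) ω < s}).toReal
        ≤ 21 + 85 * (s + 1) ^ 2 / m ^ 2) ∧
    (∑' n : ℕ, (if (s + 1) / m ≤ (n : ℝ) then
        (n : ℝ) * exp (-(((n : ℝ) * m - s) ^ 2) / (2 * n * m)) else 0)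
      ≤ 4 * (1 + 4 * ((s + 1) / m) ^ 2)) := by
  obtain ⟨hgsum, hgbound⟩ := aux_sum m s hm hs
  have hq : 0 < (s + 1) / m := by positivity
  set g : ℕ → ℝ := fun n : ℕ => if (s + 1) / m ≤ (n : ℝ) then
      (n : ℝ) * Real.exp (-(((n : ℝ) * m - s) ^ 2) / (2 * n * m)) else 0 with hgdef
  constructor
  · -- Part 1
    set C : ℕ → ℝ := fun n : ℕ => if ((n:ℝ) + 1) < (s + 1) / m then ((n:ℝ) + 1) else 0
      with hCdef
    have hp : ∀ n : ℕ, ((n : ℝ) + 1) * (P {ω | S (n + 1) ω < s}).toReal ≤ g (n+1) + C n := by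
      intro n
      by_cases hc : (s + 1) / m ≤ ((n:ℝ) + 1)
      · have hC0 : C n = 0 := by simp only [hCdef, if_neg (not_lt.mpr hc)]
        rw [hC0, add_zero]
        have hc' : (s + 1) / m ≤ ((n+1 : ℕ) : ℝ) := by push_cast; exact hc
        have hgv : g (n+1) = ((n+1:ℕ) : ℝ) *
            Real.exp (-((((n+1:ℕ) : ℝ) * m - s) ^ 2) / (2 * ((n+1:ℕ):ℝ) * m)) := by
          simp only [hgdef, if_pos hc']
        set t : ℝ := ((n:ℝ) + 1) * m - s with htdef
        have ht : 0 < t := by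
          have := (div_le_iff₀ hm).mp hc
          rw [htdef]; nlinarith
        have hsub : {ω | S (n+1) ω < s} ⊆ {ω | S (n+1) ω - ((n+1:ℕ):ℝ) * m ≤ -t} := by
          intro ω hω
          simp only [Set.mem_setOf_eq] at hω ⊢
          push_cast
          rw [htdef]
          linarith
        have hmono : (P {ω | S (n+1) ω < s}).toReal ≤
            (P {ω | S (n+1) ω - ((n+1:ℕ):ℝ) * m ≤ -t}).toReal :=
          ENNReal.toReal_mono (measure_ne_top P _) (measure_mono hsub)
        have htl := htail (n+1) (Nat.le_add_left 1 n) t ht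
        have hexp : Real.exp (-(t ^ 2) / (2 * ((n+1:ℕ):ℝ) * m)) =
            Real.exp (-((((n+1:ℕ) : ℝ) * m - s) ^ 2) / (2 * ((n+1:ℕ):ℝ) * m)) := by
          rw [htdef]; push_cast; ring_nf
        rw [hgv]
        have : (P {ω | S (n+1) ω < s}).toReal ≤
            Real.exp (-((((n+1:ℕ) : ℝ) * m - s) ^ 2) / (2 * ((n+1:ℕ):ℝ) * m)) := by
          rw [← hexp]
          exact le_trans hmono htl
        have hn0 : (0:ℝ) ≤ (n:ℝ) + 1 := by positivity
        have := mul_le_mul_of_nonneg_left this hn0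
        push_cast
        push_cast at this
        linarith
      · push_neg at hc
        have hC : C n = (n:ℝ) + 1 := by simp only [hCdef, if_pos hc]
        have hg0 : 0 ≤ g (n+1) := by
          simp only [hgdef]; split
          · positivity
          · exact le_rfl
        have h1 : (P {ω | S (n + 1) ω < s}).toReal ≤ 1 := by
          simpa using ENNReal.toReal_mono (by simp) (prob_le_one (μ := P) (s := {ω | S (n + 1) ω < s}))
        rw [hC]
        nlinarith [Nat.cast_nonneg (α := ℝ) n]
    have hg' : Summable (fun n => g (n+1)) := by
      rw [summable_nat_add_iff 1]; exact hgsum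
    have hCsupp : ∀ n ∉ Finset.range ⌊(s+1)/m⌋₊, C n = 0 := by
      intro n hn
      simp only [Finset.mem_range, not_lt] at hn
      have h1 : (s+1)/m < (⌊(s+1)/m⌋₊ : ℝ) + 1 := Nat.lt_floor_add_one _
      have h2 : ((⌊(s+1)/m⌋₊ : ℕ) : ℝ) ≤ (n:ℝ) := by exact_mod_cast hn
      simp only [hCdef, if_neg (not_lt.mpr (by linarith : (s+1)/m ≤ (n:ℝ) + 1))]
    have hCsum : Summable C := summable_of_ne_finset_zero hCsupp
    have hpsum : Summable (fun n : ℕ => ((n : ℝ) + 1) * (P {ω | S (n + 1) ω < s}).toReal) := by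
      apply Summable.of_nonneg_of_le (fun n => by positivity) hp (hg'.add hCsum)
    have hT : ∑' n : ℕ, ((n : ℝ) + 1) * (P {ω | S (n + 1) ω < s}).toReal ≤
        (∑' n, g (n+1)) + ∑' n, C n := by
      rw [← Summable.tsum_add hg' hCsum]
      exact Summable.tsum_le_tsum hp hpsum (hg'.add hCsum)
    have hshift : ∑' n, g (n+1) = ∑' n, g n := by
      have h0 : g 0 = 0 := by
        simp only [hgdef, Nat.cast_zero, if_neg (not_le.mpr hq)]
      rw [Summable.tsum_eq_zero_add hgsum, h0, zero_add]
    have hCbound : ∑' n, C n ≤ ((s+1)/m)^2 := by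
      rw [tsum_eq_sum hCsupp]
      have hb : ∀ n ∈ Finset.range ⌊(s+1)/m⌋₊, C n ≤ (s+1)/m := by
        intro n _
        simp only [hCdef]; split
        · linarith [lt_of_lt_of_le (show ((n:ℝ)+1) < (s+1)/m by assumption) le_rfl]
        · positivity
      calc ∑ n ∈ Finset.range ⌊(s+1)/m⌋₊, C n
          ≤ (Finset.range ⌊(s+1)/m⌋₊).card • ((s+1)/m) := Finset.sum_le_card_nsmul _ _ _ hb
        _ = (⌊(s+1)/m⌋₊ : ℝ) * ((s+1)/m) := by
            rw [Finset.card_range, nsmul_eq_mul]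
        _ ≤ ((s+1)/m) * ((s+1)/m) := by
            have := Nat.floor_le hq.le
            nlinarith
        _ = ((s+1)/m)^2 := by ring
    have hq2 : 85 * (s + 1) ^ 2 / m ^ 2 = 85 * ((s+1)/m)^2 := by
      rw [div_pow]; ring
    rw [hq2]
    have hfinal : ∑' n : ℕ, ((n : ℝ) + 1) * (P {ω | S (n + 1) ω < s}).toReal ≤
        14 * ((s+1)/m)^2 + 2 * ((s+1)/m) + 1 := by
      rw [hshift] at hT
      linarith [hT, hgbound, hCbound]
    nlinarith [sq_nonneg ((s+1)/m - 1), hq]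
  · -- Part 2
    refine le_trans hgbound ?_
    nlinarith [sq_nonneg ((s+1)/m - 1)]
end

section
/- For integers 2 ≤ k ≤ (N/log N)^{1/2} + 1 and N ≥ 3, the holding probability p_{kk} = ∏_{i=1}^{k-1}(1 - i/N) satisfies p_{kk} ≤ 1 - (1/4)·C(k,2)/N. -/
/-!
Since `1 - t ≤ exp (-t)`, the product is at most `exp (-x)` with `x = C(k,2)/N`. The bound on `k`
gives `(k-1)² ≤ N`, hence `x ≤ 1`, and on `[0, 1]` one has `exp (-x) ≤ 1/(1+x) ≤ 1 - x/2`.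
-/

open Finset Real

theorem Finset.prod_one_sub_le_exp_neg_sum {ι : Type*} (s : Finset ι) {f : ι → ℝ}
    (hf : ∀ i ∈ s, f i ≤ 1) : ∏ i ∈ s, (1 - f i) ≤ exp (-∑ i ∈ s, f i) := by
  rw [← sum_neg_distrib, exp_sum]
  exact prod_le_prod (fun i hi ↦ sub_nonneg.2 (hf i hi)) fun i _ ↦ one_sub_le_exp_neg (f i)

theorem Finset.two_mul_sum_Icc_one_natCast {R : Type*} [CommSemiring R] (m : ℕ) :
    2 * ∑ i ∈ Icc 1 m, (i : R) = m * (m + 1) := by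
  induction m with
  | zero => simp
  | succ n ih =>
    rw [sum_Icc_succ_top (by omega), mul_add, ih]
    push_cast
    ring

theorem Real.exp_neg_le_one_sub_half {x : ℝ} (hx₀ : 0 ≤ x) (hx₁ : x ≤ 1) :
    exp (-x) ≤ 1 - x / 2 :=
  calc exp (-x) = (exp x)⁻¹ := exp_neg x
    _ ≤ (1 + x)⁻¹ := by gcongr; linarith [add_one_le_exp x]
    _ ≤ 1 - x / 2 := by
      rw [inv_le_iff_one_le_mul₀ (by positivity)]
      nlinarith

theorem Real.sq_le_of_le_sqrt_div_log {N t : ℝ} (hN : exp 1 ≤ N) (ht : 0 ≤ t)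
    (h : t ≤ √(N / log N)) : t ^ 2 ≤ N := by
  have hN₀ : 0 < N := (exp_pos 1).trans_le hN
  have hlog : 1 ≤ log N := by rwa [le_log_iff_exp_le hN₀]
  have hdiv : N / log N ≤ N := div_le_self hN₀.le hlog
  exact (le_sqrt ht hN₀.le).1 (h.trans (sqrt_le_sqrt hdiv))

/-- For integers N ≥ 3 and 2 ≤ k ≤ √(N/log N) + 1, the Wright-Fisher holding
probability p_{kk} = ∏_{i=1}^{k-1}(1 - i/N) satisfies p_{kk} ≤ 1 - (1/4)·(k(k-1)/2)/N. -/
theorem stmt_13 (N k : ℕ) (hN : 3 ≤ N) (hk : 2 ≤ k)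
    (hkN : (k : ℝ) ≤ Real.sqrt ((N : ℝ) / Real.log N) + 1) :
    ∏ i ∈ Finset.Icc 1 (k - 1), (1 - (i : ℝ) / N)
      ≤ 1 - (1 / 4) * ((k : ℝ) * ((k : ℝ) - 1) / 2) / N := by
  obtain ⟨m, rfl⟩ : ∃ m, k = m + 1 := ⟨k - 1, by omega⟩
  simp only [Nat.add_sub_cancel, Nat.cast_add, Nat.cast_one, add_sub_cancel_right] at hkN ⊢
  have hN₀ : (0 : ℝ) < N := by positivity
  have hm : (m : ℝ) ^ 2 ≤ N := sq_le_of_le_sqrt_div_log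
    (exp_one_lt_three.le.trans (by exact_mod_cast hN)) m.cast_nonneg (by linarith)
  have hmN : (m : ℝ) ≤ N :=
    (by exact_mod_cast Nat.le_self_pow two_ne_zero m : (m : ℝ) ≤ m ^ 2).trans hm
  set x := (m + 1) * m / 2 / (N : ℝ)
  have hsum : ∑ i ∈ Icc 1 m, (i : ℝ) / N = x := by
    rw [← sum_div]
    congr 1
    linarith [two_mul_sum_Icc_one_natCast (R := ℝ) m]
  have hx₁ : x ≤ 1 := by
    rw [div_le_one hN₀, div_le_iff₀ two_pos]
    nlinarith
  calc ∏ i ∈ Icc 1 m, (1 - (i : ℝ) / N) ≤ exp (-x) := by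
        rw [← hsum]
        refine prod_one_sub_le_exp_neg_sum _ fun i hi ↦ (div_le_one hN₀).2 ?_
        exact (Nat.cast_le.2 (mem_Icc.1 hi).2).trans hmN
    _ ≤ 1 - x / 2 := exp_neg_le_one_sub_half (by positivity) hx₁
    _ ≤ 1 - 1 / 4 * x := by linarith [show 0 ≤ x by positivity]
    _ = 1 - 1 / 4 * ((m + 1) * m / 2) / N := by rw [mul_div_assoc]
end
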